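/- Let f : ℤ → ℝ with Σ_m |f(m)|/√(1+|m|) < ∞, let n ∈ ℤ, and let S₂(n,t) = Σ_{m≠n} (f(m) - f(n)) ∫₀¹ p_u(n-m) e^{-t²/(4u)}/u du. Then |S₂(n,t) - Σ_{m≠n} (f(m)-f(n)) ∫₀¹ p_u(n-m)/u du| ≤ C t ( √(1+|n|) Σ_m |f(m)|/√(1+|m|) + |f(n)| Σ_m 1/Γ(|m|+1) ) for all t ∈ (0,1); in particular S₂(n,t) → Σ_{m≠n}(f(m)-f(n)) ∫₀¹ p_u(n-m)/u du as t → 0⁺. -/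

import Mathlib

open MeasureTheory Real Set

/-- The modified Bessel function of the first kind of integer order, via its power series. -/
noncomputable def besselI (k : ℕ) (z : ℝ) : ℝ :=
  ∑' m : ℕ, (z/2) ^ (2*m + k) / ((Nat.factorial m : ℝ) * (Nat.factorial (m + k) : ℝ))

/-- The heat kernel of the discrete Laplacian on ℤ: p_u(k) = e^{-2u} I_{|k|}(2u). -/
noncomputable def discHeat (u : ℝ) (k : ℤ) : ℝ := Real.exp (-2*u) * besselI k.natAbs (2*u)

/-!
For `u ∈ [0, 1]` the power series gives `p_u(k) ≤ u^|k| / |k|!`, so every weight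
`∫₀¹ p_u(k) e^{-t²/4u} du/u` with `k ≠ 0` lies in `[0, 1/|k|!]`, and since
`1 - e^{-x} ≤ √x` it moves by at most `t/|k|!` when `t` is switched off (what is left of the
integrand is `u^{-1/2}`, which is integrable). As `√(1+|m|) ≤ 2 √(1+|n|) |n-m|!`, the terms
`|f m - f n| / |n-m|!` are dominated by a summable majorant whose sum is twice the
bracket in the claimed bound.
-/

open scoped Nat

lemma norm_besselI_term_le (K m : ℕ) (z : ℝ) :
    ‖(z/2) ^ (2*m + K) / ((m ! : ℝ) * ((m + K)! : ℝ))‖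
      ≤ |z/2| ^ K / K ! * (((z/2)^2) ^ m / m !) := by
  have hK : (K ! : ℝ) ≤ (m + K)! := by exact_mod_cast Nat.factorial_le (by omega)
  rw [norm_div, norm_pow, Real.norm_eq_abs, Real.norm_of_nonneg (by positivity), pow_add, pow_mul,
    sq_abs, show |z/2| ^ K / K ! * (((z/2)^2) ^ m / m !)
      = ((z/2)^2) ^ m * |z/2| ^ K / (m ! * K !) by ring]
  gcongr

lemma summable_besselI_term (K : ℕ) (z : ℝ) :
    Summable fun m : ℕ => (z/2) ^ (2*m + K) / ((m ! : ℝ) * ((m + K)! : ℝ)) :=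
  .of_norm_bounded ((Real.summable_pow_div_factorial _).mul_left _) (norm_besselI_term_le K · z)

lemma besselI_le (K : ℕ) (z : ℝ) : besselI K z ≤ |z/2| ^ K / K ! * Real.exp ((z/2)^2) := by
  calc besselI K z ≤ ∑' m : ℕ, |z/2| ^ K / K ! * (((z/2)^2) ^ m / m !) :=
        Summable.tsum_le_tsum (fun m => (le_abs_self _).trans (norm_besselI_term_le K m z))
          (summable_besselI_term K z) ((Real.summable_pow_div_factorial _).mul_left _)
    _ = |z/2| ^ K / K ! * Real.exp ((z/2)^2) := by
      rw [tsum_mul_left, Real.exp_eq_exp_ℝ, NormedSpace.exp_eq_tsum_div]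

lemma besselI_nonneg (K : ℕ) {z : ℝ} (hz : 0 ≤ z) : 0 ≤ besselI K z :=
  tsum_nonneg fun _ => by positivity

lemma discHeat_nonneg {u : ℝ} (hu : 0 ≤ u) (k : ℤ) : 0 ≤ discHeat u k :=
  mul_nonneg (Real.exp_nonneg _) (besselI_nonneg _ (by positivity))

lemma discHeat_le {u : ℝ} (hu₀ : 0 ≤ u) (hu₂ : u ≤ 2) (k : ℤ) :
    discHeat u k ≤ u ^ k.natAbs / k.natAbs ! := by
  calc discHeat u k
        ≤ Real.exp (-2*u) * (|2*u/2| ^ k.natAbs / k.natAbs ! * Real.exp ((2*u/2)^2)) :=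
        mul_le_mul_of_nonneg_left (besselI_le _ _) (Real.exp_nonneg _)
    _ = Real.exp (u * (u - 2)) * (u ^ k.natAbs / k.natAbs !) := by
      rw [mul_div_cancel_left₀ u two_ne_zero, abs_of_nonneg hu₀, ← mul_assoc,
        mul_comm (Real.exp _), mul_assoc, ← Real.exp_add]
      ring_nf
    _ ≤ u ^ k.natAbs / k.natAbs ! :=
      mul_le_of_le_one_left (by positivity)
        (Real.exp_le_one_iff.mpr (mul_nonpos_of_nonneg_of_nonpos hu₀ (by linarith)))

lemma measurable_discHeat (k : ℤ) : Measurable fun u : ℝ => discHeat u k := by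
  refine measurable_exp.comp (by fun_prop) |>.mul <| measurable_of_tendsto_metrizable
    (f := fun N (u : ℝ) => ∑ m ∈ Finset.range N,
      (2*u/2) ^ (2*m + k.natAbs) / ((m ! : ℝ) * ((m + k.natAbs)! : ℝ)))
    (fun N => by fun_prop) ?_
  exact tendsto_pi_nhds.mpr fun u => (summable_besselI_term _ _).hasSum.tendsto_sum_nat

/-- `heatIntegral t (n - m)` is the weight of `f m - f n` in `S₂ t`. -/
noncomputable def heatIntegral (t : ℝ) (k : ℤ) : ℝ :=
  ∫ u in Ioo (0:ℝ) 1, discHeat u k * Real.exp (-t^2/(4*u)) / u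

lemma heatIntegral_zero (k : ℤ) :
    heatIntegral 0 k = ∫ u in Ioo (0:ℝ) 1, discHeat u k / u := by
  simp [heatIntegral]

lemma one_sub_exp_neg_le_sqrt {x : ℝ} (hx : 0 ≤ x) : 1 - Real.exp (-x) ≤ √x := by
  rcases le_total x 1 with h | h
  · calc 1 - Real.exp (-x) ≤ x := by linarith [Real.add_one_le_exp (-x)]
      _ ≤ √x := Real.le_sqrt_of_sq_le (by nlinarith)
  · calc 1 - Real.exp (-x) ≤ 1 := by linarith [Real.exp_nonneg (-x)]
      _ ≤ √x := Real.one_le_sqrt.mpr h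

section Integrand

variable {k : ℤ} {t u : ℝ}

lemma discHeat_div_le (hk : k ≠ 0) (hu₀ : 0 < u) (hu₁ : u ≤ 1) :
    discHeat u k / u ≤ u ^ (k.natAbs - 1) / k.natAbs ! := by
  rw [div_le_iff₀ hu₀, div_mul_eq_mul_div, ← pow_succ, Nat.sub_add_cancel (by omega)]
  exact discHeat_le hu₀.le (by linarith) k

lemma heatIntegrand_nonneg (hu : 0 < u) : 0 ≤ discHeat u k * Real.exp (-t^2/(4*u)) / u := by
  have := discHeat_nonneg hu.le k
  positivity

lemma exp_neg_sq_div_le_one (hu : 0 ≤ u) : Real.exp (-t^2/(4*u)) ≤ 1 :=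
  Real.exp_le_one_iff.mpr <|
    div_nonpos_of_nonpos_of_nonneg (neg_nonpos.mpr (sq_nonneg t)) (by positivity)

lemma heatIntegrand_le_discHeat_div (hu : 0 < u) :
    discHeat u k * Real.exp (-t^2/(4*u)) / u ≤ discHeat u k / u := by
  gcongr
  exact mul_le_of_le_one_right (discHeat_nonneg hu.le k) (exp_neg_sq_div_le_one hu.le)

lemma discHeat_div_le_inv_factorial (hk : k ≠ 0) (hu : u ∈ Ioo (0:ℝ) 1) :
    discHeat u k / u ≤ 1 / k.natAbs ! :=
  (discHeat_div_le hk hu.1 hu.2.le).trans (by gcongr; exact pow_le_one₀ hu.1.le hu.2.le)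

lemma heatIntegrand_sub_le (hk : k ≠ 0) (ht : 0 ≤ t) (hu : u ∈ Ioo (0:ℝ) 1) :
    discHeat u k / u - discHeat u k * Real.exp (-t^2/(4*u)) / u
      ≤ t / (2 * k.natAbs !) * u ^ (-(1/2) : ℝ) := by
  obtain ⟨hu₀, hu₁⟩ := hu
  have hgap : 1 - Real.exp (-t^2/(4*u)) ≤ t / (2 * √u) := by
    calc 1 - Real.exp (-t^2/(4*u)) = 1 - Real.exp (-(t / (2 * √u))^2) := by
          rw [div_pow, mul_pow, Real.sq_sqrt hu₀.le]; ring_nf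
      _ ≤ √((t / (2 * √u))^2) := one_sub_exp_neg_le_sqrt (sq_nonneg _)
      _ = t / (2 * √u) := Real.sqrt_sq (by positivity)
  have hsqrt : u ^ (-(1/2) : ℝ) = (√u)⁻¹ := by
    rw [Real.rpow_neg hu₀.le, ← Real.sqrt_eq_rpow]
  calc discHeat u k / u - discHeat u k * Real.exp (-t^2/(4*u)) / u
      = discHeat u k / u * (1 - Real.exp (-t^2/(4*u))) := by ring
    _ ≤ 1 / k.natAbs ! * (t / (2 * √u)) :=
      mul_le_mul (discHeat_div_le_inv_factorial hk ⟨hu₀, hu₁⟩) hgap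
        (sub_nonneg.mpr (exp_neg_sq_div_le_one hu₀.le)) (by positivity)
    _ = t / (2 * k.natAbs !) * u ^ (-(1/2) : ℝ) := by rw [hsqrt]; field_simp

end Integrand

lemma integral_Ioo_rpow_neg_half : ∫ u in Ioo (0:ℝ) 1, u ^ (-(1/2) : ℝ) = 2 := by
  rw [← integral_Ioc_eq_integral_Ioo, ← intervalIntegral.integral_of_le zero_le_one,
    integral_rpow (Or.inl (by norm_num)), Real.one_rpow, Real.zero_rpow (by norm_num)]
  norm_num

section HeatIntegral

variable {k : ℤ} {t : ℝ}

lemma integrableOn_heatIntegrand (hk : k ≠ 0) (t : ℝ) :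
    IntegrableOn (fun u => discHeat u k * Real.exp (-t^2/(4*u)) / u) (Ioo (0:ℝ) 1) := by
  refine Measure.integrableOn_of_bounded (M := 1 / k.natAbs !) measure_Ioo_lt_top.ne
    (((measurable_discHeat k).mul (by fun_prop)).div measurable_id).aestronglyMeasurable ?_
  filter_upwards [self_mem_ae_restrict measurableSet_Ioo] with u hu
  rw [Real.norm_of_nonneg (heatIntegrand_nonneg hu.1)]
  exact (heatIntegrand_le_discHeat_div hu.1).trans (discHeat_div_le_inv_factorial hk hu)

lemma abs_heatIntegral_le (hk : k ≠ 0) (t : ℝ) : |heatIntegral t k| ≤ 1 / k.natAbs ! := by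
  rw [heatIntegral, abs_of_nonneg <|
    setIntegral_nonneg measurableSet_Ioo fun _ hu => heatIntegrand_nonneg hu.1]
  calc heatIntegral t k ≤ ∫ _ in Ioo (0:ℝ) 1, (1 / k.natAbs ! : ℝ) :=
        setIntegral_mono_on (integrableOn_heatIntegrand hk t)
          (integrableOn_const measure_Ioo_lt_top.ne) measurableSet_Ioo
          fun _ hu =>
            (heatIntegrand_le_discHeat_div hu.1).trans (discHeat_div_le_inv_factorial hk hu)
    _ = 1 / k.natAbs ! := by simp

lemma abs_heatIntegral_sub_heatIntegral_zero_le (hk : k ≠ 0) (ht : 0 ≤ t) :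
    |heatIntegral t k - heatIntegral 0 k| ≤ t / k.natAbs ! := by
  have hint₀ : IntegrableOn (fun u => discHeat u k / u) (Ioo (0:ℝ) 1) := by
    simpa using integrableOn_heatIntegrand hk 0
  rw [abs_sub_comm, heatIntegral_zero, heatIntegral, ← integral_sub hint₀
    (integrableOn_heatIntegrand hk t)]
  have hgap_nonneg : ∀ u ∈ Ioo (0:ℝ) 1,
      0 ≤ discHeat u k / u - discHeat u k * Real.exp (-t^2/(4*u)) / u := fun u hu =>
    sub_nonneg.mpr (heatIntegrand_le_discHeat_div hu.1)
  rw [abs_of_nonneg (setIntegral_nonneg measurableSet_Ioo hgap_nonneg)]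
  calc ∫ u in Ioo (0:ℝ) 1, (discHeat u k / u - discHeat u k * Real.exp (-t^2/(4*u)) / u)
      ≤ ∫ u in Ioo (0:ℝ) 1, t / (2 * k.natAbs !) * u ^ (-(1/2) : ℝ) :=
        setIntegral_mono_on (hint₀.sub (integrableOn_heatIntegrand hk t))
          (((intervalIntegral.integrableOn_Ioo_rpow_iff one_pos).mpr (by norm_num)).const_mul _)
          measurableSet_Ioo fun _ hu => heatIntegrand_sub_le hk ht hu
    _ = t / k.natAbs ! := by
      rw [integral_const_mul, integral_Ioo_rpow_neg_half]; field_simp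

end HeatIntegral

lemma sqrt_one_add_natAbs_le (m n : ℤ) :
    √(1 + m.natAbs) ≤ 2 * √(1 + n.natAbs) * (n - m).natAbs ! := by
  set K := (n - m).natAbs
  have hm : (m.natAbs : ℝ) ≤ n.natAbs + K := by
    exact_mod_cast (by omega : m.natAbs ≤ n.natAbs + K)
  have hK : (K : ℝ) ≤ K ! := by exact_mod_cast Nat.self_le_factorial K
  have hK₁ : (1 : ℝ) ≤ K ! := by exact_mod_cast Nat.factorial_pos K
  have hn : (0 : ℝ) ≤ n.natAbs := Nat.cast_nonneg _
  calc √(1 + m.natAbs) ≤ √((2 * √(1 + n.natAbs) * K !) ^ 2) := by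
        rw [mul_pow, mul_pow, Real.sq_sqrt (by positivity)]
        gcongr
        calc 1 + (m.natAbs : ℝ) ≤ (1 + n.natAbs) * (1 + K) := by nlinarith
          _ ≤ (1 + n.natAbs) * (2 ^ 2 * K ! ^ 2) := by gcongr; nlinarith
          _ = 2 ^ 2 * (1 + n.natAbs) * K ! ^ 2 := by ring
    _ = 2 * √(1 + n.natAbs) * K ! := Real.sqrt_sq (by positivity)

noncomputable def heatMajorant (f : ℤ → ℝ) (n m : ℤ) : ℝ :=
  2 * (√(1 + n.natAbs) * (|f m| / √(1 + m.natAbs)) + |f n| / (n - m).natAbs !)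

section Majorant

variable {f : ℤ → ℝ}

lemma heatMajorant_nonneg (n m : ℤ) : 0 ≤ heatMajorant f n m := by
  unfold heatMajorant; positivity

lemma summable_inv_factorial_natAbs : Summable fun k : ℤ => (1 : ℝ) / k.natAbs ! := by
  have h : Summable fun j : ℕ => (1 : ℝ) / j ! := by
    simpa using Real.summable_pow_div_factorial 1
  exact .of_nat_of_neg (by simpa using h) (by simpa using h)

lemma summable_inv_factorial_natAbs_sub (n : ℤ) :
    Summable fun m : ℤ => (1 : ℝ) / (n - m).natAbs ! :=
  (Equiv.subLeft n).summable_iff.mpr summable_inv_factorial_natAbs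

lemma tsum_inv_factorial_natAbs_sub (n : ℤ) :
    ∑' m : ℤ, (1 : ℝ) / (n - m).natAbs ! = ∑' m : ℤ, 1 / Real.Gamma (m.natAbs + 1) := by
  simp only [Real.Gamma_nat_eq_factorial]
  exact (Equiv.subLeft n).tsum_eq fun k : ℤ => (1 : ℝ) / k.natAbs !

lemma summable_heatMajorant (hf : Summable fun m : ℤ => |f m| / √(1 + m.natAbs)) (n : ℤ) :
    Summable (heatMajorant f n) :=
  ((hf.mul_left _).add (by simpa only [mul_one_div] using
    (summable_inv_factorial_natAbs_sub n).mul_left |f n|)).mul_left 2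

lemma tsum_heatMajorant (hf : Summable fun m : ℤ => |f m| / √(1 + m.natAbs)) (n : ℤ) :
    ∑' m, heatMajorant f n m = 2 * (√(1 + n.natAbs) * ∑' m : ℤ, |f m| / √(1 + m.natAbs)
      + |f n| * ∑' m : ℤ, 1 / Real.Gamma ((m.natAbs : ℝ) + 1)) := by
  simp only [heatMajorant, ← mul_one_div |f n|]
  rw [tsum_mul_left, (hf.mul_left _).tsum_add ((summable_inv_factorial_natAbs_sub n).mul_left _),
    tsum_mul_left, tsum_mul_left, tsum_inv_factorial_natAbs_sub]

lemma abs_sub_mul_le_heatMajorant {n m : ℤ} {c s : ℝ} (hs : 0 ≤ s)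
    (hc : |c| ≤ s / (n - m).natAbs !) :
    |(f m - f n) * c| ≤ s * heatMajorant f n m := by
  have hfm : |f m| / (n - m).natAbs ! ≤ 2 * √(1 + n.natAbs) * (|f m| / √(1 + m.natAbs)) := by
    have hsqrt : 0 < √(1 + m.natAbs) := by positivity
    calc |f m| / (n - m).natAbs !
        = |f m| / √(1 + m.natAbs) * (√(1 + m.natAbs) / (n - m).natAbs !) := by field_simp
      _ ≤ |f m| / √(1 + m.natAbs) * (2 * √(1 + n.natAbs)) := by
          gcongr
          exact div_le_of_le_mul₀ (by positivity) (by positivity) (sqrt_one_add_natAbs_le m n)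
      _ = 2 * √(1 + n.natAbs) * (|f m| / √(1 + m.natAbs)) := by ring
  calc |(f m - f n) * c| ≤ (|f m| + |f n|) * (s / (n - m).natAbs !) := by
        rw [abs_mul]; gcongr; exact abs_sub _ _
    _ = s * (|f m| / (n - m).natAbs ! + |f n| / (n - m).natAbs !) := by ring
    _ ≤ s * heatMajorant f n m := by
      have : 0 ≤ |f n| / (n - m).natAbs ! := by positivity
      unfold heatMajorant
      gcongr
      linarith

lemma abs_tsum_heatIntegral_sub_le (hf : Summable fun m : ℤ => |f m| / √(1 + m.natAbs))
    (n : ℤ) {t : ℝ} (ht : 0 ≤ t) :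
    |∑' m : {m : ℤ // m ≠ n}, (f m - f n) * heatIntegral t (n - m)
        - ∑' m : {m : ℤ // m ≠ n}, (f m - f n) * heatIntegral 0 (n - m)|
      ≤ t * ∑' m, heatMajorant f n m := by
  have hsub : Summable fun m : {m : ℤ // m ≠ n} => heatMajorant f n m :=
    (summable_heatMajorant hf n).subtype _
  have hk (m : {m : ℤ // m ≠ n}) : n - m ≠ 0 := sub_ne_zero.mpr (Ne.symm m.2)
  have hsum (s : ℝ) :
      Summable fun m : {m : ℤ // m ≠ n} => (f m - f n) * heatIntegral s (n - m) :=
    .of_norm_bounded hsub fun m => by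
      simpa using abs_sub_mul_le_heatMajorant zero_le_one (abs_heatIntegral_le (hk m) s)
  rw [← (hsum t).tsum_sub (hsum 0), ← Real.norm_eq_abs]
  refine tsum_of_norm_bounded (hsub.hasSum.mul_left t) (fun m => ?_) |>.trans ?_
  · rw [← mul_sub]
    exact abs_sub_mul_le_heatMajorant ht (abs_heatIntegral_sub_heatIntegral_zero_le (hk m) ht)
  · exact mul_le_mul_of_nonneg_left (Summable.tsum_subtype_le _ {m | m ≠ n}
      (heatMajorant_nonneg n) (summable_heatMajorant hf n)) ht

end Majorant

theorem stmt13 (f : ℤ → ℝ)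
    (hf : Summable fun m : ℤ => |f m| / Real.sqrt (1 + (m.natAbs : ℝ))) (n : ℤ)
    (S₂ : ℝ → ℝ)
    (hS₂ : ∀ t : ℝ, S₂ t = ∑' m : {m : ℤ // m ≠ n},
      (f m - f n) * ∫ u in Ioo (0:ℝ) 1, discHeat u (n - m) * Real.exp (-t^2/(4*u)) / u) :
    ∃ C > 0, (∀ t ∈ Ioo (0:ℝ) 1,
      |S₂ t - ∑' m : {m : ℤ // m ≠ n},
          (f m - f n) * ∫ u in Ioo (0:ℝ) 1, discHeat u (n - m) / u|
        ≤ C * t * (Real.sqrt (1 + (n.natAbs : ℝ)) *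
            (∑' m : ℤ, |f m| / Real.sqrt (1 + (m.natAbs : ℝ)))
          + |f n| * ∑' m : ℤ, 1 / Real.Gamma ((m.natAbs : ℝ) + 1))) ∧
    Filter.Tendsto S₂ (nhdsWithin 0 (Ioi 0))
      (nhds (∑' m : {m : ℤ // m ≠ n},
        (f m - f n) * ∫ u in Ioo (0:ℝ) 1, discHeat u (n - m) / u)) := by
  set M := √(1 + (n.natAbs : ℝ)) * (∑' m : ℤ, |f m| / √(1 + (m.natAbs : ℝ)))
    + |f n| * ∑' m : ℤ, 1 / Real.Gamma ((m.natAbs : ℝ) + 1)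
  have hbound (t : ℝ) (ht : 0 ≤ t) : |S₂ t - ∑' m : {m : ℤ // m ≠ n},
      (f m - f n) * ∫ u in Ioo (0:ℝ) 1, discHeat u (n - m) / u| ≤ 2 * t * M := by
    have h := abs_tsum_heatIntegral_sub_le hf n ht
    simp only [heatIntegral_zero, tsum_heatMajorant hf] at h
    rw [hS₂, mul_assoc, mul_left_comm]
    exact h
  refine ⟨2, two_pos, fun t ht => hbound t ht.1.le, ?_⟩
  rw [← tendsto_sub_nhds_zero_iff]
  refine squeeze_zero_norm' ?_ (tendsto_nhdsWithin_of_tendsto_nhds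
    ((by fun_prop : Continuous fun t : ℝ => 2 * t * M).tendsto' 0 0 (by simp)))
  filter_upwards [self_mem_nhdsWithin] with t ht
  exact hbound t (le_of_lt ht)
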